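/- arXiv:1406.4418 — 4 statements merged into one kernel-verified Lean document; each statement's English description precedes it below -/
import Mathlib

section
/- For n i.i.d. random phase unitaries U^1,...,U^n on C^d (each diagonal with i.i.d. phases satisfying E[e^{iθ}] = 0 and the fourth-moment identity E[e^{i(θ(a)-θ(b)+θ(c)-θ(e))}] = (δ_{ab}δ_{ce} + δ_{ae}δ_{bc})/(1+δ_{ac})), any Fourier basis vector |m⟩ = ⊗_j |m^j⟩, and any unit vector |Φ⟩ ∈ (C^d)^{⊗n}, the random variable q(Φ) = |⟨Φ| (⊗_j U^j) |m⟩|² satisfies E[q(Φ)²] ≤ 2^n / d^{2n}. -/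
/-
Expand `q² = |∑_w c_w E_w|⁴`, where `E_w = ∏_j e^{iθ^j(w_j)}`, as a sum over quadruples
`(w, x, y, z)` of `c_w c̄_x c_y c̄_z · E_w Ē_x E_y Ē_z`. The rows `θ^j` are independent, so the
expectation of each term factorises over the sites `j`, and the fourth-moment identity bounds the
factor at site `j` by `δ(w_j,x_j) δ(y_j,z_j) + δ(w_j,z_j) δ(x_j,y_j)`. Expanding this product, each
of the `2^n` choices `t` of a pairing per site forces `x` and `z` to be the two mixtures of `w` and
`y` along `t`; since this mixing is an involution of pairs, AM-GM bounds the remaining sum by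
`(∑_w |c_w|²)² = d^{-2n}`.
-/

open MeasureTheory ProbabilityTheory Finset ComplexConjugate

/-- The law of the array is the product of the entry laws; currying it groups the factors by rows. -/
lemma ProbabilityTheory.iIndepFun.curry {Ω ι κ β : Type*} [MeasurableSpace Ω]
    [MeasurableSpace β] {P : Measure Ω} {X : ι → κ → Ω → β} (mX : ∀ i j, Measurable (X i j))
    (hX : iIndepFun (fun p : ι × κ => X p.1 p.2) P) :
    iIndepFun (fun i ω j => X i j ω) P := by
  have := hX.isProbabilityMeasure
  have (i : ι) (j : κ) : IsProbabilityMeasure (P.map (X i j)) :=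
    Measure.isProbabilityMeasure_map (mX i j).aemeasurable
  have hlaw := (iIndepFun_iff_map_fun_eq_infinitePi_map (X := fun p : ι × κ => X p.1 p.2)
    fun p => mX p.1 p.2).1 hX
  have hrow (i : ι) := (iIndepFun_iff_map_fun_eq_infinitePi_map (X := X i) (mX i)).1
    (hX.precomp (g := Prod.mk i) (Prod.mk_right_injective i))
  have hcurry : P.map (fun ω i j => X i j ω)
      = (P.map fun ω (p : ι × κ) => X p.1 p.2 ω).map (MeasurableEquiv.curry ι κ β) := by
    rw [Measure.map_map (MeasurableEquiv.measurable _)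
      (measurable_pi_lambda (fun ω (p : ι × κ) => X p.1 p.2 ω) fun p => mX p.1 p.2)]
    rfl
  rw [iIndepFun_iff_map_fun_eq_infinitePi_map fun i => measurable_pi_lambda _ (mX i), hcurry, hlaw,
    Measure.infinitePi_map_curry (fun i j => P.map (X i j))]
  exact congrArg _ (funext fun i => (hrow i).symm)

lemma Complex.ofReal_sq_sq_norm_sum {ι : Type*} [Fintype ι] (b : ι → ℂ) :
    (((‖∑ i, b i‖ ^ 2) ^ 2 : ℝ) : ℂ)
      = ∑ w, ∑ x, ∑ y, ∑ z, b w * conj (b x) * (b y * conj (b z)) := by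
  push_cast
  rw [← Complex.mul_conj', map_sum, sum_mul_sum, sq]
  simp_rw [sum_mul, mul_sum]

lemma integral_sq_sq_norm_sum_mul_le {Ω ι : Type*} [MeasurableSpace Ω] [Fintype ι]
    {P : Measure Ω} [IsFiniteMeasure P] (a : ι → ℂ) {E : ι → Ω → ℂ}
    (hE : ∀ i, AEStronglyMeasurable (E i) P) (hE1 : ∀ i ω, ‖E i ω‖ ≤ 1)
    {K : ι → ι → ι → ι → ℝ}
    (hK : ∀ w x y z, ‖∫ ω, E w ω * conj (E x ω) * (E y ω * conj (E z ω)) ∂P‖ ≤ K w x y z) :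
    ∫ ω, (‖∑ i, a i * E i ω‖ ^ 2) ^ 2 ∂P
      ≤ ∑ w, ∑ x, ∑ y, ∑ z, ‖a w‖ * ‖a x‖ * ‖a y‖ * ‖a z‖ * K w x y z := by
  have hG (w x y z : ι) :
      Integrable (fun ω => E w ω * conj (E x ω) * (E y ω * conj (E z ω))) P := by
    refine Integrable.of_bound (by fun_prop) 1 (ae_of_all _ fun ω => ?_)
    simp only [norm_mul, RCLike.norm_conj]
    exact mul_le_one₀ (mul_le_one₀ (hE1 w ω) (norm_nonneg _) (hE1 x ω)) (by positivity)
      (mul_le_one₀ (hE1 y ω) (norm_nonneg _) (hE1 z ω))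
  have hexpand (ω : Ω) : (((‖∑ i, a i * E i ω‖ ^ 2) ^ 2 : ℝ) : ℂ)
      = ∑ w, ∑ x, ∑ y, ∑ z, a w * conj (a x) * (a y * conj (a z)) *
          (E w ω * conj (E x ω) * (E y ω * conj (E z ω))) := by
    rw [Complex.ofReal_sq_sq_norm_sum]
    simp only [map_mul]
    refine Fintype.sum_congr _ _ fun w => Fintype.sum_congr _ _ fun x =>
      Fintype.sum_congr _ _ fun y => Fintype.sum_congr _ _ fun z => by ring
  calc ∫ ω, (‖∑ i, a i * E i ω‖ ^ 2) ^ 2 ∂P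
      ≤ ‖∫ ω, (((‖∑ i, a i * E i ω‖ ^ 2) ^ 2 : ℝ) : ℂ) ∂P‖ := by
        rw [integral_complex_ofReal, Complex.norm_real]
        exact Real.le_norm_self _
    _ = ‖∑ w, ∑ x, ∑ y, ∑ z, a w * conj (a x) * (a y * conj (a z)) *
          ∫ ω, E w ω * conj (E x ω) * (E y ω * conj (E z ω)) ∂P‖ := by
        simp only [hexpand]
        rw [integral_finsetSum _ fun w _ => by fun_prop]
        congr 1
        refine Fintype.sum_congr _ _ fun w => ?_
        rw [integral_finsetSum _ fun x _ => by fun_prop]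
        refine Fintype.sum_congr _ _ fun x => ?_
        rw [integral_finsetSum _ fun y _ => by fun_prop]
        refine Fintype.sum_congr _ _ fun y => ?_
        rw [integral_finsetSum _ fun z _ => by fun_prop]
        exact Fintype.sum_congr _ _ fun z => integral_const_mul _ _
    _ ≤ _ := by
      refine norm_sum_le_of_le _ fun w _ => norm_sum_le_of_le _ fun x _ =>
        norm_sum_le_of_le _ fun y _ => norm_sum_le_of_le _ fun z _ => ?_
      rw [norm_mul, norm_mul, norm_mul, norm_mul, RCLike.norm_conj, RCLike.norm_conj,
        ← mul_assoc (‖a w‖ * ‖a x‖)]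
      exact mul_le_mul_of_nonneg_left (hK w x y z) (by positivity)

lemma sum_mul_comp_le_sum_sq {β : Type*} [Fintype β] {σ : β → β} (hσ : σ.Bijective)
    (g : β → ℝ) : ∑ p, g p * g (σ p) ≤ ∑ p, g p ^ 2 := by
  have h := sum_le_sum fun p (_ : p ∈ univ) => two_mul_le_add_sq (g p) (g (σ p))
  rw [sum_add_distrib, Function.Bijective.sum_comp hσ (fun p => g p ^ 2)] at h
  simp only [mul_assoc, ← mul_sum] at h
  linarith

section Pairings

variable {ι α : Type*} [Fintype ι] [DecidableEq ι]

lemma prod_pairing_eq_sum_piecewise {R : Type*} [CommSemiring R] [DecidableEq α]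
    (w x y z : ι → α) :
    ∏ j, ((if w j = x j then (1 : R) else 0) * (if y j = z j then 1 else 0)
        + (if w j = z j then 1 else 0) * (if x j = y j then 1 else 0))
      = ∑ t ∈ univ.powerset, if x = t.piecewise w y ∧ z = t.piecewise y w then 1 else 0 := by
  rw [prod_add]
  refine sum_congr rfl fun t _ => ?_
  simp only [ite_zero_mul_ite_zero, mul_one, prod_boole]
  congr 1
  simp only [funext_iff, mem_sdiff, mem_univ, true_and]
  refine propext ⟨?_, ?_⟩
  · rintro ⟨hin, hout⟩
    refine ⟨fun j => ?_, fun j => ?_⟩ <;> by_cases hj : j ∈ t <;> simp [hj, hin j, hout j]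
  · rintro ⟨hx, hz⟩
    refine ⟨fun j hj => ?_, fun j hj => ?_⟩ <;> simp [hx j, hz j, hj]

lemma sum_mul_piecewise_le_sq_sum_sq (t : Finset ι) [Fintype α] (f : (ι → α) → ℝ) :
    ∑ w, ∑ y, f w * f (t.piecewise w y) * f y * f (t.piecewise y w) ≤ (∑ w, f w ^ 2) ^ 2 := by
  have hσ : Function.Involutive fun p : (ι → α) × (ι → α) =>
      (t.piecewise p.1 p.2, t.piecewise p.2 p.1) := fun p => by
    ext j <;> by_cases hj : j ∈ t <;> simp [hj]
  have h := sum_mul_comp_le_sum_sq hσ.bijective fun p => f p.1 * f p.2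
  simp only [Fintype.sum_prod_type] at h
  rw [sq, sum_mul_sum]
  convert h using 3 with w _ y <;> ring

lemma sum_mul_prod_pairing_le [Fintype α] [DecidableEq α] (f : (ι → α) → ℝ) :
    ∑ w, ∑ x, ∑ y, ∑ z, f w * f x * f y * f z *
        ∏ j, ((if w j = x j then (1 : ℝ) else 0) * (if y j = z j then 1 else 0)
          + (if w j = z j then 1 else 0) * (if x j = y j then 1 else 0))
      ≤ 2 ^ Fintype.card ι * (∑ w, f w ^ 2) ^ 2 := by
  have hcollapse (w y : ι → α) :
      ∑ x, ∑ z, f w * f x * f y * f z *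
        ∏ j, ((if w j = x j then (1 : ℝ) else 0) * (if y j = z j then 1 else 0)
          + (if w j = z j then 1 else 0) * (if x j = y j then 1 else 0))
      = ∑ t ∈ univ.powerset, f w * f (t.piecewise w y) * f y * f (t.piecewise y w) := by
    simp only [prod_pairing_eq_sum_piecewise, mul_sum]
    rw [sum_congr rfl fun x _ => sum_comm, sum_comm]
    refine sum_congr rfl fun t _ => ?_
    simp [ite_and]
  calc _ = ∑ w, ∑ y, ∑ t ∈ univ.powerset,
          f w * f (t.piecewise w y) * f y * f (t.piecewise y w) := by
        refine sum_congr rfl fun w _ => ?_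
        rw [sum_comm]
        exact sum_congr rfl fun y _ => hcollapse w y
    _ = ∑ t ∈ univ.powerset, ∑ w, ∑ y, f w * f (t.piecewise w y) * f y * f (t.piecewise y w) := by
        rw [sum_congr rfl fun w _ => sum_comm]
        exact sum_comm
    _ ≤ ∑ t ∈ (univ : Finset ι).powerset, (∑ w, f w ^ 2) ^ 2 :=
        sum_le_sum fun t _ => sum_mul_piecewise_le_sq_sum_sq t f
    _ = 2 ^ Fintype.card ι * (∑ w, f w ^ 2) ^ 2 := by
        rw [sum_const, card_powerset, card_univ, nsmul_eq_mul]; push_cast; ring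

end Pairings

lemma Complex.exp_I_mul_conj_fourfold (a b c e : ℝ) :
    Complex.exp (Complex.I * a) * conj (Complex.exp (Complex.I * b)) *
        (Complex.exp (Complex.I * c) * conj (Complex.exp (Complex.I * e)))
      = Complex.exp (Complex.I * (a - b + c - e)) := by
  simp only [← Complex.exp_conj, map_mul, Complex.conj_I, Complex.conj_ofReal, ← Complex.exp_add]
  congr 1
  ring

section Phases

variable {Ω ι κ : Type*} [Fintype ι]

/-- `⟨w| ⊗_j U^j |w⟩` for the diagonal unitaries `U^j = diag(e^{iθ^j(·)})`. -/
noncomputable def tensorPhase (θ : ι → κ → Ω → ℝ) (w : ι → κ) (ω : Ω) : ℂ :=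
  ∏ j, Complex.exp (Complex.I * θ j (w j) ω)

lemma norm_tensorPhase (θ : ι → κ → Ω → ℝ) (w : ι → κ) (ω : Ω) : ‖tensorPhase θ w ω‖ = 1 := by
  simp [tensorPhase, Complex.norm_exp_I_mul_ofReal]

lemma measurable_tensorPhase [MeasurableSpace Ω] {θ : ι → κ → Ω → ℝ}
    (hθ : ∀ j a, Measurable (θ j a)) (w : ι → κ) : Measurable (tensorPhase θ w) := by
  unfold tensorPhase
  fun_prop

lemma tensorPhase_fourfold (θ : ι → κ → Ω → ℝ) (w x y z : ι → κ) (ω : Ω) :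
    tensorPhase θ w ω * conj (tensorPhase θ x ω) * (tensorPhase θ y ω * conj (tensorPhase θ z ω))
      = ∏ j, Complex.exp (Complex.I * (θ j (w j) ω - θ j (x j) ω + θ j (y j) ω - θ j (z j) ω)) := by
  simp only [tensorPhase, map_prod, ← prod_mul_distrib]
  exact prod_congr rfl fun j _ => by exact_mod_cast Complex.exp_I_mul_conj_fourfold _ _ _ _

lemma norm_integral_tensorPhase_fourfold_le [MeasurableSpace Ω] {P : Measure Ω}
    {θ : ι → κ → Ω → ℝ} (hθ : ∀ j a, Measurable (θ j a))
    (hindep : iIndepFun (fun p : ι × κ => θ p.1 p.2) P) {B : κ → κ → κ → κ → ℝ}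
    (hB : ∀ j a b c e,
      ‖∫ ω, Complex.exp (Complex.I * (θ j a ω - θ j b ω + θ j c ω - θ j e ω)) ∂P‖ ≤ B a b c e)
    (w x y z : ι → κ) :
    ‖∫ ω, tensorPhase θ w ω * conj (tensorPhase θ x ω) *
        (tensorPhase θ y ω * conj (tensorPhase θ z ω)) ∂P‖ ≤ ∏ j, B (w j) (x j) (y j) (z j) := by
  simp only [tensorPhase_fourfold]
  rw [(hindep.curry hθ).integral_fun_prod_comp
    (f := fun j v => Complex.exp (Complex.I * (v (w j) - v (x j) + v (y j) - v (z j))))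
    (fun j => (measurable_pi_lambda _ (hθ j)).aemeasurable)
    (fun j => by fun_prop), norm_prod]
  exact prod_le_prod (fun j _ => norm_nonneg _) fun j _ => hB j _ _ _ _

end Phases

lemma norm_pairing_div_le {α : Type*} [DecidableEq α] (a b c e : α) :
    ‖((if a = b then (1 : ℂ) else 0) * (if c = e then 1 else 0)
        + (if a = e then 1 else 0) * (if b = c then 1 else 0)) / (1 + (if a = c then 1 else 0))‖
      ≤ (if a = b then (1 : ℝ) else 0) * (if c = e then 1 else 0)
        + (if a = e then 1 else 0) * (if b = c then 1 else 0) := by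
  split_ifs <;> norm_num

lemma sq_norm_mul_fourier_coeff {ι : Type*} [Fintype ι] {d : ℕ} (m w : ι → Fin d) (φ : ℂ) :
    ‖conj φ * ∏ j, ((1 / Real.sqrt d) *
        Complex.exp (2 * Real.pi * Complex.I * (m j : ℕ) * (w j : ℕ) / d))‖ ^ 2
      = ‖φ‖ ^ 2 / d ^ Fintype.card ι := by
  have hphase (j : ι) :
      ‖Complex.exp (2 * Real.pi * Complex.I * (m j : ℕ) * (w j : ℕ) / d)‖ = 1 := by
    rw [Complex.norm_exp]
    simp [Complex.div_re, Complex.mul_re, Complex.mul_im]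
  simp only [norm_mul, RCLike.norm_conj, norm_prod, hphase, mul_one, norm_div, norm_one,
    Complex.norm_real, Real.norm_eq_abs, abs_of_nonneg (Real.sqrt_nonneg _), prod_const, card_univ]
  have hsqrt : Real.sqrt d ^ 2 = d := Real.sq_sqrt (Nat.cast_nonneg d)
  conv_rhs => rw [← hsqrt]
  ring

theorem stmt5_general {Ω : Type*} [MeasurableSpace Ω] (P : Measure Ω) [IsProbabilityMeasure P]
    (n d : ℕ)
    (θ : Fin n → Fin d → Ω → ℝ)
    (hmeas : ∀ j w, Measurable (θ j w))
    (hindep : iIndepFun (fun p : Fin n × Fin d => θ p.1 p.2) P)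
    (h4 : ∀ j (a b c e : Fin d),
      ∫ ω, Complex.exp (Complex.I * (θ j a ω - θ j b ω + θ j c ω - θ j e ω)) ∂P
        = ((if a = b then (1:ℂ) else 0) * (if c = e then 1 else 0)
            + (if a = e then 1 else 0) * (if b = c then 1 else 0))
          / (1 + (if a = c then 1 else 0)))
    (m : Fin n → Fin d)
    (Φ : (Fin n → Fin d) → ℂ) (hΦ : ∑ w, ‖Φ w‖ ^ 2 = 1) :
    ∫ ω, (‖∑ w : Fin n → Fin d, (starRingEnd ℂ) (Φ w) *
          ∏ j, (Complex.exp (Complex.I * θ j (w j) ω) *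
            ((1 / Real.sqrt d) *
              Complex.exp (2 * Real.pi * Complex.I * (m j : ℕ) * (w j : ℕ) / d)))‖ ^ 2) ^ 2 ∂P
      ≤ 2 ^ n / (d : ℝ) ^ (2 * n) := by
  let c (w : Fin n → Fin d) : ℂ := conj (Φ w) * ∏ j, ((1 / Real.sqrt d) *
      Complex.exp (2 * Real.pi * Complex.I * (m j : ℕ) * (w j : ℕ) / d))
  have hsplit (ω : Ω) : ∑ w : Fin n → Fin d, conj (Φ w) *
      ∏ j, (Complex.exp (Complex.I * θ j (w j) ω) * ((1 / Real.sqrt d) *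
        Complex.exp (2 * Real.pi * Complex.I * (m j : ℕ) * (w j : ℕ) / d)))
      = ∑ w, c w * tensorPhase θ w ω :=
    sum_congr rfl fun w _ => by simp only [c, tensorPhase, prod_mul_distrib]; ring
  have hc : ∑ w, ‖c w‖ ^ 2 = 1 / d ^ n := by
    simp only [c, sq_norm_mul_fourier_coeff, ← sum_div, hΦ, Fintype.card_fin]
  calc _ = ∫ ω, (‖∑ w, c w * tensorPhase θ w ω‖ ^ 2) ^ 2 ∂P := by simp only [hsplit]
    _ ≤ ∑ w, ∑ x, ∑ y, ∑ z, ‖c w‖ * ‖c x‖ * ‖c y‖ * ‖c z‖ *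
          ∏ j, ((if w j = x j then (1 : ℝ) else 0) * (if y j = z j then 1 else 0)
            + (if w j = z j then 1 else 0) * (if x j = y j then 1 else 0)) :=
        integral_sq_sq_norm_sum_mul_le c
          (fun w => (measurable_tensorPhase hmeas w).aestronglyMeasurable)
          (fun w ω => (norm_tensorPhase θ w ω).le)
          (norm_integral_tensorPhase_fourfold_le hmeas hindep
            fun j a b c e => h4 j a b c e ▸ norm_pairing_div_le a b c e)
    _ ≤ 2 ^ n * (∑ w, ‖c w‖ ^ 2) ^ 2 := by
        simpa using sum_mul_prod_pairing_le fun w => ‖c w‖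
    _ = 2 ^ n / (d : ℝ) ^ (2 * n) := by rw [hc]; ring

/-- for `n` i.i.d. random diagonal phase unitaries on `C^d` (i.i.d. phases with
vanishing first moment and the stated fourth-moment identity), a product Fourier basis vector
`|m⟩` and any fixed unit vector `Φ` in `(C^d)^{⊗n}`, the random variable
`q(Φ) = |⟨Φ|(⊗_j U^j)|m⟩|²` satisfies `E[q(Φ)²] ≤ 2^n / d^{2n}`. -/
theorem stmt5 {Ω : Type*} [MeasurableSpace Ω] (P : Measure Ω) [IsProbabilityMeasure P]
    (n d : ℕ) (hd : 0 < d)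
    (θ : Fin n → Fin d → Ω → ℝ)
    (hmeas : ∀ j w, Measurable (θ j w))
    (hindep : iIndepFun (fun p : Fin n × Fin d => θ p.1 p.2) P)
    (hident : ∀ p q : Fin n × Fin d, IdentDistrib (θ p.1 p.2) (θ q.1 q.2) P P)
    (h1 : ∀ j w, ∫ ω, Complex.exp (Complex.I * θ j w ω) ∂P = 0)
    (h4 : ∀ j (a b c e : Fin d),
      ∫ ω, Complex.exp (Complex.I * (θ j a ω - θ j b ω + θ j c ω - θ j e ω)) ∂P
        = ((if a = b then (1:ℂ) else 0) * (if c = e then 1 else 0)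
            + (if a = e then 1 else 0) * (if b = c then 1 else 0))
          / (1 + (if a = c then 1 else 0)))
    (m : Fin n → Fin d)
    (Φ : (Fin n → Fin d) → ℂ) (hΦ : ∑ w, ‖Φ w‖ ^ 2 = 1) :
    ∫ ω, (‖∑ w : Fin n → Fin d, (starRingEnd ℂ) (Φ w) *
          ∏ j, (Complex.exp (Complex.I * θ j (w j) ω) *
            ((1 / Real.sqrt d) *
              Complex.exp (2 * Real.pi * Complex.I * (m j : ℕ) * (w j : ℕ) / d)))‖ ^ 2) ^ 2 ∂P
      ≤ 2 ^ n / (d : ℝ) ^ (2 * n) :=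
  stmt5_general P n d θ hmeas hindep h4 m Φ hΦ
end

section
/- Maurer's tail bound: Let X_1,...,X_T be i.i.d. non-negative real-valued random variables distributed as X with E[X], E[X²] < ∞. Then for any τ > 0, Pr{ (1/T) Σ_{t=1}^T X_t < E[X] − τ } ≤ exp( −T τ² / (2 E[X²]) ). -/
/-!
Chernoff's method on the lower tail. For `x ≥ 0` one has `exp (-x) ≤ 1 - x + x² / 2`, so for a
non-negative `X` and `β ≥ 0`,
`E[exp (-β X)] ≤ 1 - β E[X] + β² E[X²] / 2 ≤ exp (-β E[X] + β² E[X²] / 2)`: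
non-negativity lets the second moment alone control the lower tail. Independence multiplies these
bounds over the `T` summands, and `β = τ / E[X²]` optimises the resulting Chernoff bound.
-/

open MeasureTheory ProbabilityTheory Real Finset

lemma Real.exp_neg_le_one_sub_add_sq_div_two {x : ℝ} (hx : 0 ≤ x) :
    exp (-x) ≤ 1 - x + x ^ 2 / 2 := by
  set f : ℝ → ℝ := fun y => 1 - y + y ^ 2 / 2 - exp (-y)
  have hf : ∀ y, HasDerivAt f (-1 + y + exp (-y)) y := fun y =>
    ((((hasDerivAt_id' y).const_sub 1).add ((hasDerivAt_pow 2 y).div_const 2)).sub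
      (hasDerivAt_neg y).exp).congr_deriv (by push_cast; ring)
  have hmono : MonotoneOn f (Set.Ici 0) := by
    refine monotoneOn_of_deriv_nonneg (convex_Ici 0)
      (fun y _ => (hf y).continuousAt.continuousWithinAt)
      (fun y _ => (hf y).differentiableAt.differentiableWithinAt) fun y _ => ?_
    rw [(hf y).deriv]
    linarith [add_one_le_exp (-y)]
  have := hmono Set.self_mem_Ici (Set.mem_Ici.2 hx) hx
  simp only [f, neg_zero, exp_zero] at this
  linarith

section LowerTail

variable {Ω ι : Type*} [MeasurableSpace Ω] {μ : Measure Ω}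

lemma integrable_exp_neg_mul_of_nonneg [IsFiniteMeasure μ] {X : Ω → ℝ} (hX : AEMeasurable X μ)
    (hnn : ∀ᵐ ω ∂μ, 0 ≤ X ω) {β : ℝ} (hβ : 0 ≤ β) :
    Integrable (fun ω => exp (-β * X ω)) μ := by
  refine (integrable_const (1 : ℝ)).mono' (hX.const_mul (-β)).exp.aestronglyMeasurable ?_
  filter_upwards [hnn] with ω hω
  rw [norm_of_nonneg (exp_pos _).le, exp_le_one_iff]
  nlinarith

lemma mgf_neg_le_exp_of_nonneg [IsProbabilityMeasure μ] {X : Ω → ℝ} (hnn : ∀ᵐ ω ∂μ, 0 ≤ X ω)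
    (hint1 : Integrable X μ) (hint2 : Integrable (fun ω => X ω ^ 2) μ) {β : ℝ} (hβ : 0 ≤ β) :
    mgf X μ (-β) ≤ exp (-β * μ[X] + β ^ 2 * μ[fun ω => X ω ^ 2] / 2) := by
  have hlin : Integrable (fun ω => 1 - β * X ω) μ := (integrable_const 1).sub (hint1.const_mul β)
  have hsq : Integrable (fun ω => β ^ 2 * X ω ^ 2 / 2) μ := (hint2.const_mul _).div_const 2
  calc mgf X μ (-β) ≤ ∫ ω, 1 - β * X ω + β ^ 2 * X ω ^ 2 / 2 ∂μ := by
        refine integral_mono_ae (integrable_exp_neg_mul_of_nonneg hint1.aemeasurable hnn hβ)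
          (hlin.add hsq) ?_
        filter_upwards [hnn] with ω hω
        simpa [neg_mul, mul_pow] using exp_neg_le_one_sub_add_sq_div_two (mul_nonneg hβ hω)
    _ = -β * μ[X] + β ^ 2 * μ[fun ω => X ω ^ 2] / 2 + 1 := by
        rw [integral_add hlin hsq, integral_sub (integrable_const 1) (hint1.const_mul β),
          integral_div, integral_const_mul, integral_const_mul]
        simp only [integral_const, probReal_univ, smul_eq_mul, mul_one]
        ring
    _ ≤ _ := add_one_le_exp _

theorem measureReal_sum_le_le_of_identDistrib_of_nonneg {X : ι → Ω → ℝ} {s : Finset ι} {j : ι}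
    (hj : j ∈ s) (hmeas : ∀ i, Measurable (X i)) (hindep : iIndepFun X μ)
    (hident : ∀ i ∈ s, ∀ k ∈ s, IdentDistrib (X i) (X k) μ μ)
    (hnn : ∀ i ∈ s, ∀ᵐ ω ∂μ, 0 ≤ X i ω) (hint1 : Integrable (X j) μ)
    (hint2 : Integrable (fun ω => X j ω ^ 2) μ) {ε : ℝ} (hε : 0 ≤ ε) :
    μ.real {ω | ∑ i ∈ s, X i ω ≤ #s * (μ[X j] - ε)}
      ≤ exp (-(#s * ε ^ 2) / (2 * μ[fun ω => X j ω ^ 2])) := by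
  have := hindep.isProbabilityMeasure
  set m := μ[X j]
  set m2 := μ[fun ω => X j ω ^ 2]
  have hm2_nonneg : 0 ≤ m2 := integral_nonneg fun ω => sq_nonneg (X j ω)
  rcases hm2_nonneg.eq_or_lt with hm2 | hm2
  · -- the right-hand side is `exp 0 = 1` by the convention `x / 0 = 0`
    rw [← hm2, mul_zero, div_zero, exp_zero]
    exact measureReal_le_one
  set β := ε / m2 with hβ
  have hβ0 : 0 ≤ β := div_nonneg hε hm2.le
  have hint : Integrable (fun ω => exp (-β * (∑ i ∈ s, X i) ω)) μ := by
    refine integrable_exp_neg_mul_of_nonneg (by fun_prop) ?_ hβ0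
    filter_upwards [(ae_ball_iff s.countable_toSet).2 hnn] with ω hω
    simpa using sum_nonneg hω
  calc μ.real {ω | ∑ i ∈ s, X i ω ≤ #s * (m - ε)}
      = μ.real {ω | (∑ i ∈ s, X i) ω ≤ #s * (m - ε)} := by simp only [Finset.sum_apply]
    _ ≤ exp (-(-β) * (#s * (m - ε))) * mgf (X j) μ (-β) ^ #s := by
        rw [← mgf_sum_of_identDistrib hmeas hindep hident hj]
        exact measure_le_le_exp_mul_mgf _ (neg_nonpos.2 hβ0) hint
    _ ≤ exp (β * (#s * (m - ε))) * exp (-β * m + β ^ 2 * m2 / 2) ^ #s := by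
        rw [neg_neg]
        gcongr
        · exact mgf_nonneg
        · exact mgf_neg_le_exp_of_nonneg (hnn j hj) hint1 hint2 hβ0
    _ = exp (-(#s * ε ^ 2) / (2 * m2)) := by
        rw [← exp_nat_mul, ← exp_add, hβ]
        congr 1
        field_simp
        ring

end LowerTail

/-- Maurer's tail bound: for i.i.d. non-negative real random variables
`X_1, …, X_T` with finite first and second moments, and any `τ > 0`,
`Pr{(1/T)Σ X_t < E[X] − τ} ≤ exp(−Tτ²/(2E[X²]))`. -/
theorem stmt6 {Ω : Type*} [MeasurableSpace Ω] (P : Measure Ω) [IsProbabilityMeasure P]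
    (T : ℕ) (hT : 0 < T)
    (X : Fin T → Ω → ℝ)
    (hmeas : ∀ t, Measurable (X t))
    (hnn : ∀ t ω, 0 ≤ X t ω)
    (hindep : iIndepFun X P)
    (hident : ∀ s t, IdentDistrib (X s) (X t) P P)
    (hint1 : ∀ t, Integrable (X t) P)
    (hint2 : ∀ t, Integrable (fun ω => (X t ω) ^ 2) P)
    (τ : ℝ) (hτ : 0 < τ) :
    P {ω | (1 / T : ℝ) * ∑ t, X t ω < (∫ ω, X ⟨0, hT⟩ ω ∂P) - τ}
      ≤ ENNReal.ofReal
          (Real.exp (-(T * τ ^ 2) / (2 * ∫ ω, (X ⟨0, hT⟩ ω) ^ 2 ∂P))) := by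
  set t₀ : Fin T := ⟨0, hT⟩
  have hsub : {ω | (1 / T : ℝ) * ∑ t, X t ω < (∫ ω, X t₀ ω ∂P) - τ}
      ⊆ {ω | ∑ t ∈ univ, X t ω ≤ #(univ : Finset (Fin T)) * ((∫ ω, X t₀ ω ∂P) - τ)} := by
    intro ω hω
    have hTpos : (0 : ℝ) < T := Nat.cast_pos.2 hT
    simp only [Set.mem_ofPred_eq, card_univ, Fintype.card_fin] at hω ⊢
    rw [one_div, inv_mul_lt_iff₀ hTpos] at hω
    exact hω.le
  refine (measure_mono hsub).trans ?_
  rw [← ofReal_measureReal]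
  refine ENNReal.ofReal_le_ofReal ?_
  simpa using measureReal_sum_le_le_of_identDistrib_of_nonneg (mem_univ t₀) hmeas hindep
    (fun i _ k _ => hident i k) (fun i _ => ae_of_all _ (hnn i)) (hint1 t₀) (hint2 t₀) hτ.le
end

section
/- For any probability distribution Q = (Q_1,...,Q_N) on N outcomes, if at least (1−ε)N of the entries satisfy Q_m ≥ (1−ε)/N and all entries satisfy Q_m ≤ 1 − 2η((1−ε)/N) where η(x) = −x log₂ x, then the Shannon entropy satisfies H(Q) ≥ (1−ε)² log₂(N/(1−ε)) ≥ (1−2ε) log₂ N, assuming 0 < ε < 1/2 and N sufficiently large so that −(1−2ε)log₂(1−ε) ≥ 0. -/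
/-- `η(x) = −x log₂ x`. -/
noncomputable def eta2 (x : ℝ) : ℝ := -x * Real.logb 2 x

/-!
Put `a = (1 - ε)/N` and `h = η(a)`. Since `η` is concave, on `[a, 1 - 2h]` it is bounded below by
the smaller of its values at the endpoints, and `η(1 - 2h) ≥ h` as soon as `h ≤ 1/4`, which holds
for large `N` because `η(x) → 0` as `x → 0`. Hence each of the at least `(1 - ε)N` large entries
contributes at least `h` to the entropy, and `(1 - ε)N · η((1 - ε)/N) = (1 - ε)² log₂(N/(1 - ε))`.
-/

open Filter Finset

lemma eta2_eq_negMulLog_div (x : ℝ) : eta2 x = Real.negMulLog x / Real.log 2 := by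
  rw [eta2, Real.negMulLog, Real.logb]
  ring

lemma concaveOn_eta2 : ConcaveOn ℝ (Set.Ici 0) eta2 := by
  have heq : eta2 = fun x => (Real.log 2)⁻¹ • Real.negMulLog x := by
    funext x
    rw [eta2_eq_negMulLog_div, smul_eq_mul, div_eq_inv_mul]
  rw [heq]
  exact Real.concaveOn_negMulLog.smul (by positivity)

lemma eta2_nonneg {x : ℝ} (h0 : 0 ≤ x) (h1 : x ≤ 1) : 0 ≤ eta2 x := by
  rw [eta2_eq_negMulLog_div]
  have := Real.negMulLog_nonneg h0 h1
  positivity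

lemma tendsto_eta2_nhds_zero : Tendsto eta2 (nhds 0) (nhds 0) := by
  have h := (Real.continuous_negMulLog.div_const (Real.log 2)).tendsto 0
  simpa only [Real.negMulLog_zero, zero_div, ← eta2_eq_negMulLog_div] using h

lemma eventually_eta2_div_natCast_lt (c : ℝ) {δ : ℝ} (hδ : 0 < δ) :
    ∀ᶠ N : ℕ in atTop, eta2 (c / N) < δ :=
  (tendsto_eta2_nhds_zero.comp (tendsto_const_div_atTop_nhds_zero_nat c)).eventually
    (gt_mem_nhds hδ)

-- `-b log b ≥ b (1 - b) = 2bh ≥ h` for `b = 1 - 2h ≥ 1/2`, and dividing by `log 2 < 1` only helps.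
lemma le_eta2_one_sub_two_mul {h : ℝ} (h0 : 0 ≤ h) (h1 : h ≤ 1 / 4) : h ≤ eta2 (1 - 2 * h) := by
  have hlog2 : Real.log 2 < 1 := by linarith [Real.log_two_lt_d9]
  have hlog : Real.log (1 - 2 * h) ≤ -2 * h := by
    linarith [Real.log_le_sub_one_of_pos (x := 1 - 2 * h) (by linarith)]
  rw [eta2_eq_negMulLog_div, le_div_iff₀ (Real.log_pos one_lt_two), Real.negMulLog]
  nlinarith

lemma eta2_le_of_mem_Icc {a x : ℝ} (ha0 : 0 ≤ a) (ha1 : a ≤ 1) (hsmall : eta2 a ≤ 1 / 4)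
    (hx : x ∈ Set.Icc a (1 - 2 * eta2 a)) : eta2 a ≤ eta2 x := by
  have hmin := concaveOn_eta2.min_le_of_mem_Icc (Set.mem_Ici.2 ha0)
    (Set.mem_Ici.2 (by linarith)) hx
  rwa [min_eq_left (le_eta2_one_sub_two_mul (eta2_nonneg ha0 ha1) hsmall)] at hmin

lemma card_filter_mul_eta2_le_sum_eta2 {ι : Type*} [Fintype ι] (Q : ι → ℝ) (hQ0 : ∀ m, 0 ≤ Q m)
    (hQsum : ∑ m, Q m = 1) {a : ℝ} (ha0 : 0 ≤ a) (ha1 : a ≤ 1) (hsmall : eta2 a ≤ 1 / 4)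
    (hQub : ∀ m, Q m ≤ 1 - 2 * eta2 a) :
    (#{m | a ≤ Q m} : ℝ) * eta2 a ≤ ∑ m, eta2 (Q m) := by
  have hQ1 (m : ι) : Q m ≤ 1 := hQsum ▸ single_le_sum (fun i _ => hQ0 i) (mem_univ m)
  calc (#{m | a ≤ Q m} : ℝ) * eta2 a = ∑ _m ∈ {m | a ≤ Q m}, eta2 a := by
        rw [sum_const, nsmul_eq_mul]
    _ ≤ ∑ m ∈ {m | a ≤ Q m}, eta2 (Q m) :=
        sum_le_sum fun m hm => eta2_le_of_mem_Icc ha0 ha1 hsmall ⟨(mem_filter.1 hm).2, hQub m⟩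
    _ ≤ ∑ m, eta2 (Q m) :=
        sum_le_sum_of_subset_of_nonneg (subset_univ _) fun m _ _ => eta2_nonneg (hQ0 m) (hQ1 m)

lemma sq_mul_logb_div_eq (c : ℝ) {x : ℝ} (hx : x ≠ 0) :
    c ^ 2 * Real.logb 2 (x / c) = c * x * eta2 (c / x) := by
  rw [← inv_div, Real.logb_inv, eta2]
  field_simp

lemma one_sub_two_mul_logb_le {ε x : ℝ} (hε0 : 0 ≤ ε) (hε1 : ε < 1) (hx : 1 ≤ x) :
    (1 - 2 * ε) * Real.logb 2 x ≤ (1 - ε) ^ 2 * Real.logb 2 (x / (1 - ε)) := by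
  have hlog : Real.logb 2 x ≤ Real.logb 2 (x / (1 - ε)) :=
    Real.logb_le_logb_of_le one_lt_two (by linarith) (le_div_self (by linarith) (by linarith)
      (by linarith))
  have hlog0 : 0 ≤ Real.logb 2 x := Real.logb_nonneg one_lt_two hx
  nlinarith [sq_nonneg ε]

/-- for `0 < ε < 1/2` and all sufficiently large `N`, any probability vector
`Q` on `N` outcomes with at least `(1−ε)N` entries `≥ (1−ε)/N` and all entries
`≤ 1 − 2η((1−ε)/N)` has Shannon entropy
`H(Q) ≥ (1−ε)² log₂(N/(1−ε)) ≥ (1−2ε) log₂ N`. -/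
theorem stmt10 (ε : ℝ) (hε : 0 < ε) (hε' : ε < 1 / 2) :
    ∃ N₀ : ℕ, ∀ N : ℕ, N₀ ≤ N → ∀ Q : Fin N → ℝ,
      (∀ m, 0 ≤ Q m) → (∑ m, Q m = 1) →
      ((1 - ε) * N ≤ ((Finset.univ.filter fun m => (1 - ε) / N ≤ Q m).card : ℝ)) →
      (∀ m, Q m ≤ 1 - 2 * eta2 ((1 - ε) / N)) →
      (1 - ε) ^ 2 * Real.logb 2 (N / (1 - ε)) ≤ ∑ m, eta2 (Q m) ∧
      (1 - 2 * ε) * Real.logb 2 N ≤ (1 - ε) ^ 2 * Real.logb 2 (N / (1 - ε)) := by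
  obtain ⟨N₀, hN₀⟩ := eventually_atTop.1 <|
    (eventually_ge_atTop 1).and
      (eventually_eta2_div_natCast_lt (1 - ε) (by norm_num : (0 : ℝ) < 1 / 4))
  refine ⟨N₀, fun N hN Q hQ0 hQsum hcard hQub => ?_⟩
  obtain ⟨hN1, hsmall⟩ := hN₀ N hN
  have hN1 : (1 : ℝ) ≤ N := by exact_mod_cast hN1
  have ha0 : 0 ≤ (1 - ε) / N := div_nonneg (by linarith) (by linarith)
  have ha1 : (1 - ε) / N ≤ 1 := div_le_one_of_le₀ (by linarith) (by linarith)
  refine ⟨?_, one_sub_two_mul_logb_le hε.le (by linarith) hN1⟩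
  calc (1 - ε) ^ 2 * Real.logb 2 (N / (1 - ε)) = (1 - ε) * N * eta2 ((1 - ε) / N) :=
        sq_mul_logb_div_eq _ (by positivity)
    _ ≤ (#{m | (1 - ε) / N ≤ Q m} : ℝ) * eta2 ((1 - ε) / N) :=
        mul_le_mul_of_nonneg_right hcard (eta2_nonneg ha0 ha1)
    _ ≤ ∑ m, eta2 (Q m) :=
        card_filter_mul_eta2_le_sum_eta2 Q hQ0 hQsum ha0 ha1 hsmall.le hQub
end

section
/- Accessible information formula for uniform ensemble: Let E = { 1/N, ρ_m } be an ensemble of N equiprobable states ρ_m = (1/K)Σ_k |Ψ_{mk}⟩⟨Ψ_{mk}| in C^N, where for each k the {|Ψ_{mk}⟩}_m form an orthonormal basis. Then for any rank-one POVM {μ_i |Φ_i⟩⟨Φ_i|}_i with Σ_i μ_i = N, the mutual information between the message M (uniform on N values) and the measurement outcome equals log₂ N − Σ_i (μ_i/N) H[Q(Φ_i)], where Q_m(Φ) = (1/K)Σ_k |⟨Φ|Ψ_{mk}⟩|². -/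
/-!
Since every `{Ψ_{mk}}_m` is an orthonormal basis and the POVM resolves the identity,
`Q(Φ_i)` is a probability vector over messages and `Σ_i μ_i Q_m(Φ_i) = 1` for every `m`.
The joint law `p(m, i) = μ_i Q_m(Φ_i) / N` therefore has uniform `M`-marginal and
`I`-marginal `μ_i / N`, and the chain rule `η(ab) = a η(b) + b η(a)` splits the joint
entropy into `H(I) + Σ_i (μ_i / N) H[Q(Φ_i)]`.
-/

open Finset

theorem eta2_mul (a b : ℝ) : eta2 (a * b) = a * eta2 b + b * eta2 a := by
  rcases eq_or_ne a 0 with rfl | ha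
  · simp [eta2]
  rcases eq_or_ne b 0 with rfl | hb
  · simp [eta2]
  unfold eta2
  rw [Real.logb_mul ha hb]
  ring

theorem natCast_mul_eta2_inv (n : ℕ) : (n : ℝ) * eta2 (n : ℝ)⁻¹ = Real.logb 2 n := by
  unfold eta2
  rw [Real.logb_inv]
  rcases eq_or_ne (n : ℝ) 0 with h | h
  · simp [h]
  · field_simp

theorem mutualInfo_uniform_prior_eq {α ι : Type*} [Fintype α] [Fintype ι]
    (μ : ι → ℝ) (q : ι → α → ℝ) (hq : ∀ i, ∑ m, q i m = 1)
    (hμq : ∀ m, ∑ i, μ i * q i m = 1) :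
    let N : ℝ := Fintype.card α
    (∑ m, eta2 (∑ i, N⁻¹ * (μ i * q i m))) + (∑ i, eta2 (∑ m, N⁻¹ * (μ i * q i m)))
        - (∑ m, ∑ i, eta2 (N⁻¹ * (μ i * q i m)))
      = Real.logb 2 N - ∑ i, (μ i / N) * ∑ m, eta2 (q i m) := by
  intro N
  have marginal_M : ∀ m, ∑ i, N⁻¹ * (μ i * q i m) = N⁻¹ := by
    simp [← mul_sum, hμq]
  have marginal_I : ∀ i, ∑ m, N⁻¹ * (μ i * q i m) = N⁻¹ * μ i := by
    simp [← mul_sum, hq]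
  have joint : ∀ i, ∑ m, eta2 (N⁻¹ * (μ i * q i m))
      = N⁻¹ * μ i * ∑ m, eta2 (q i m) + eta2 (N⁻¹ * μ i) := by
    intro i
    simp only [← mul_assoc, eta2_mul, sum_add_distrib, ← mul_sum, ← sum_mul, hq, one_mul]
  rw [sum_comm]
  simp only [marginal_M, marginal_I, joint, sum_const, card_univ, nsmul_eq_mul,
    sum_add_distrib, div_eq_inv_mul, N, natCast_mul_eta2_inv]
  ring

theorem sum_mul_star_eq_ite_of_orthonormal {R n : Type*} [CommRing R] [StarRing R]
    [Fintype n] [DecidableEq n] (v : n → n → R)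
    (h : ∀ m m', ∑ w, star (v m w) * v m' w = if m = m' then 1 else 0) (w w' : n) :
    ∑ m, v m w * star (v m w') = if w = w' then 1 else 0 := by
  let U : Matrix n n R := Matrix.of fun w m => v m w
  have hU : star U * U = 1 := by
    ext m m'
    simpa [Matrix.mul_apply, Matrix.one_apply, U] using h m m'
  have hU' : U * star U = 1 := mul_eq_one_comm.mp hU
  simpa [Matrix.mul_apply, Matrix.one_apply, U] using congr_fun₂ hU' w w'

theorem ofReal_norm_sq_eq_star_mul_self (z : ℂ) : ((‖z‖ ^ 2 : ℝ) : ℂ) = star z * z := by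
  push_cast
  exact (Complex.conj_mul' z).symm

theorem sum_mul_norm_sq_inner_eq_of_resolution {ι n : Type*} [Fintype ι] [Fintype n]
    [DecidableEq n] (c : ι → ℝ) (a : ι → n → ℂ)
    (h : ∀ w w', ∑ x, (c x : ℂ) * (a x w * star (a x w')) = if w = w' then 1 else 0)
    (b : n → ℂ) :
    ∑ x, c x * ‖∑ w, star (a x w) * b w‖ ^ 2 = ∑ w, ‖b w‖ ^ 2 := by
  apply Complex.ofReal_injective
  calc ((∑ x, c x * ‖∑ w, star (a x w) * b w‖ ^ 2 : ℝ) : ℂ)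
      = ∑ x, (c x : ℂ) * (star (∑ w, star (a x w) * b w) * ∑ w, star (a x w) * b w) := by
        simp only [Complex.ofReal_sum, Complex.ofReal_mul, ofReal_norm_sq_eq_star_mul_self]
    _ = ∑ w, ∑ w', (∑ x, (c x : ℂ) * (a x w' * star (a x w))) * (star (b w') * b w) := by
        simp only [star_sum, star_mul', star_star, mul_sum, sum_mul]
        rw [sum_comm]
        refine sum_congr rfl fun w _ => ?_
        rw [sum_comm]
        exact sum_congr rfl fun w' _ => sum_congr rfl fun x _ => by ring
    _ = ((∑ w, ‖b w‖ ^ 2 : ℝ) : ℂ) := by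
        simp only [h, ite_mul, one_mul, zero_mul, sum_ite_eq', mem_univ, if_true,
          Complex.ofReal_sum, ofReal_norm_sq_eq_star_mul_self]

theorem sum_average_norm_sq_inner_of_orthonormal {n : Type*} [Fintype n] [DecidableEq n]
    {K : ℕ} (hK : 0 < K) (Ψ : n → Fin K → n → ℂ)
    (hONB : ∀ k m m', ∑ w, star (Ψ m k w) * Ψ m' k w = if m = m' then 1 else 0)
    (φ : n → ℂ) :
    ∑ m, (K : ℝ)⁻¹ * ∑ k, ‖∑ w, star (φ w) * Ψ m k w‖ ^ 2 = ∑ w, ‖φ w‖ ^ 2 := by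
  have per_basis (k) : ∑ m, ‖∑ w, star (φ w) * Ψ m k w‖ ^ 2 = ∑ w, ‖φ w‖ ^ 2 := by
    have swap (m) : ‖∑ w, star (φ w) * Ψ m k w‖ = ‖∑ w, star (Ψ m k w) * φ w‖ := by
      rw [← norm_star, star_sum]
      simp [mul_comm]
    simp only [swap]
    simpa using sum_mul_norm_sq_inner_eq_of_resolution (fun _ => 1) (fun m => Ψ m k)
      (by simpa using sum_mul_star_eq_ite_of_orthonormal (fun m => Ψ m k) (hONB k)) φ
  rw [← mul_sum, sum_comm]
  simp only [per_basis, sum_const, card_univ, Fintype.card_fin, nsmul_eq_mul]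
  field_simp

theorem sum_mul_average_norm_sq_inner_of_resolution {ι n : Type*} [Fintype ι] [Fintype n]
    [DecidableEq n] (μ : ι → ℝ) (Φ : ι → n → ℂ)
    (hPOVM : ∀ a b, ∑ i, (μ i : ℂ) * (Φ i a * star (Φ i b)) = if a = b then 1 else 0)
    {K : ℕ} (hK : 0 < K) (ψ : Fin K → n → ℂ) (hψ : ∀ k, ∑ w, ‖ψ k w‖ ^ 2 = 1) :
    ∑ i, μ i * ((K : ℝ)⁻¹ * ∑ k, ‖∑ w, star (Φ i w) * ψ k w‖ ^ 2) = 1 := by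
  simp only [mul_sum, mul_left_comm (μ _)]
  rw [sum_comm]
  simp only [← mul_sum, sum_mul_norm_sq_inner_eq_of_resolution μ Φ hPOVM, hψ]
  simp [hK.ne']

theorem stmt14_general (N K : ℕ) (hK : 0 < K)
    (Ψ : Fin N → Fin K → (Fin N → ℂ))
    (hONB : ∀ k (m m' : Fin N),
      (∑ i, star (Ψ m k i) * Ψ m' k i) = if m = m' then 1 else 0)
    {ι : Type*} [Fintype ι] (μ : ι → ℝ) (Φ : ι → (Fin N → ℂ))
    (hunit : ∀ i, ∑ w, ‖Φ i w‖ ^ 2 = 1)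
    (hPOVM : ∀ a b : Fin N,
      ∑ i, (μ i : ℂ) * (Φ i a * star (Φ i b)) = if a = b then 1 else 0)
    (Q : (Fin N → ℂ) → Fin N → ℝ)
    (hQ : ∀ φ m, Q φ m = (K : ℝ)⁻¹ * ∑ k, ‖∑ w, star (φ w) * Ψ m k w‖ ^ 2)
    (p : Fin N → ι → ℝ)
    (hp : ∀ m i, p m i = (N : ℝ)⁻¹ * (μ i * Q (Φ i) m)) :
    (∑ m, eta2 (∑ i, p m i)) + (∑ i, eta2 (∑ m, p m i)) - (∑ m, ∑ i, eta2 (p m i))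
      = Real.logb 2 N - ∑ i, (μ i / N) * (∑ m, eta2 (Q (Φ i) m)) := by
  have hΨ_unit : ∀ m k, ∑ w, ‖Ψ m k w‖ ^ 2 = 1 := fun m k =>
    Complex.ofReal_injective (by
      simp only [Complex.ofReal_sum, ofReal_norm_sq_eq_star_mul_self, hONB k m m, if_true,
        Complex.ofReal_one])
  have hQ_sum : ∀ i, ∑ m, Q (Φ i) m = 1 := fun i => by
    simp only [hQ, sum_average_norm_sq_inner_of_orthonormal hK Ψ hONB, hunit]
  have hμQ_sum : ∀ m, ∑ i, μ i * Q (Φ i) m = 1 := fun m => by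
    simp only [hQ]
    exact sum_mul_average_norm_sq_inner_of_resolution μ Φ hPOVM hK (Ψ m) (hΨ_unit m)
  obtain rfl : p = fun m i => (N : ℝ)⁻¹ * (μ i * Q (Φ i) m) := funext₂ hp
  simpa only [Fintype.card_fin] using
    mutualInfo_uniform_prior_eq μ (fun i => Q (Φ i)) hQ_sum hμQ_sum

/-- accessible information formula for the uniform ensemble: for the
ensemble `{1/N, ρ_m}` with `ρ_m = (1/K)Σ_k |Ψ_{mk}⟩⟨Ψ_{mk}|` (the `{Ψ_{mk}}_m` orthonormal
bases), and any rank-one POVM `{μ_i|Φ_i⟩⟨Φ_i|}` with `Σ μ_i = N`, the mutual information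
`H(M) + H(I) − H(M,I)` between the message and the outcome equals
`log₂ N − Σ_i (μ_i/N) H[Q(Φ_i)]`, where `Q_m(Φ) = (1/K)Σ_k |⟨Φ|Ψ_{mk}⟩|²`. -/
theorem stmt14 (N K : ℕ) (hN : 0 < N) (hK : 0 < K)
    (Ψ : Fin N → Fin K → (Fin N → ℂ))
    (hONB : ∀ k (m m' : Fin N),
      (∑ i, star (Ψ m k i) * Ψ m' k i) = if m = m' then 1 else 0)
    {ι : Type*} [Fintype ι] (μ : ι → ℝ) (Φ : ι → (Fin N → ℂ))
    (hμ : ∀ i, 0 < μ i)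
    (hunit : ∀ i, ∑ w, ‖Φ i w‖ ^ 2 = 1)
    (hPOVM : ∀ a b : Fin N,
      ∑ i, (μ i : ℂ) * (Φ i a * star (Φ i b)) = if a = b then 1 else 0)
    (Q : (Fin N → ℂ) → Fin N → ℝ)
    (hQ : ∀ φ m, Q φ m = (K : ℝ)⁻¹ * ∑ k, ‖∑ w, star (φ w) * Ψ m k w‖ ^ 2)
    (p : Fin N → ι → ℝ)
    (hp : ∀ m i, p m i = (N : ℝ)⁻¹ * (μ i * Q (Φ i) m)) :
    (∑ m, eta2 (∑ i, p m i)) + (∑ i, eta2 (∑ m, p m i)) - (∑ m, ∑ i, eta2 (p m i))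
      = Real.logb 2 N - ∑ i, (μ i / N) * (∑ m, eta2 (Q (Φ i) m)) :=
  stmt14_general N K hK Ψ hONB μ Φ hunit hPOVM Q hQ p hp
end
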